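/- Let F be an IIA constitution on k ≥ 3 alternatives with n voters voting uniformly at random. If there exist three distinct alternatives a,b,c and two distinct voters i,j with I_i(f^{a>b}) > ε and I_j(f^{b>c}) > ε, then the probability of a non-transitive outcome satisfies P(F) > ε³/36. -/

import Mathlib

/-- Voter `i` is pivotal for `f` at input `x`. -/
def PivotalAt {n : ℕ} (f : (Fin n → Bool) → Bool) (i : Fin n) (x : Fin n → Bool) : Prop :=
  f (Function.update x i true) ≠ f (Function.update x i false)

instance {n : ℕ} (f : (Fin n → Bool) → Bool) (i : Fin n) (x : Fin n → Bool) :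
    Decidable (PivotalAt f i x) := by unfold PivotalAt; infer_instance

/-- The influence of voter `i` on `f`. -/
noncomputable def influence {n : ℕ} (f : (Fin n → Bool) → Bool) (i : Fin n) : ℝ :=
  ((Finset.univ.filter fun x : Fin n → Bool => PivotalAt f i x).card : ℝ) / 2^n

/-- `x^{a>b}` vector of a profile on `k` alternatives. -/
def pairVec {n k : ℕ} (a b : Fin k) (σ : Fin n → Equiv.Perm (Fin k)) : Fin n → Bool :=
  fun i => decide (σ i a < σ i b)

/-!
For a uniformly random profile `σ`, the vectors `x = pairVec a b σ` and `y = pairVec b c σ` are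
uniform and the pairs `(x v, y v)` are independent with `P(x v = y v) = 1/3`: bits with
correlation `-1/3`. For such pairs, reverse hypercontractivity with exponents `p = q = 2/3` gives
`P(x ∈ A ∧ y ∈ B) ≥ (P(A) P(B))^(3/2)`; on one coordinate it follows from a reverse Hölder
inequality, and it tensorizes. Taking for `A` and `B` the sets where `i` is pivotal for `f a b`
and `j` is pivotal for `f b c`, both voters are pivotal with probability `> ε³`.

In such a profile, voter `i` re-ranks `a, b, c` among themselves so as to set `f a b` freely while
keeping their `b`-vs-`c` comparison, and voter `j` sets `f b c` while keeping their `a`-vs-`b`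
comparison; both match the value of `f c a` at the new profile, which produces a cycle. Each voter
uses one of the six permutations of `{a, b, c}`, so every paradox arises from at most `36` jointly
pivotal profiles, and `P(F) > ε³/36`.
-/

open Finset Equiv

-- Reverse Hölder with exponents `2/3` and `-2` for `(A³, B³)` and `(h₁, h₂)`.
lemma reverse_holder_two {A B h₁ h₂ : ℝ} (hA : 0 ≤ A) (hB : 0 ≤ B) (hh₁ : 0 ≤ h₁)
    (hh₂ : 0 ≤ h₂) :
    (A ^ 2 + B ^ 2) ^ 3 * (h₁ ^ 2 * h₂ ^ 2)
      ≤ (A ^ 3 * h₁ + B ^ 3 * h₂) ^ 2 * (h₁ ^ 2 + h₂ ^ 2) := by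
  rw [← sub_nonneg, show (A ^ 3 * h₁ + B ^ 3 * h₂) ^ 2 * (h₁ ^ 2 + h₂ ^ 2)
      - (A ^ 2 + B ^ 2) ^ 3 * (h₁ ^ 2 * h₂ ^ 2)
      = h₁ * (A ^ 2 * h₁ - A * B * h₂) ^ 2 * (A ^ 2 * h₁ + 2 * A * B * h₂)
        + h₂ * (B ^ 2 * h₂ - A * B * h₁) ^ 2 * (B ^ 2 * h₂ + 2 * A * B * h₁) by ring]
  positivity

-- `‖(C³ + 2D³, 2C³ + D³)‖₋₂ ≥ (3/4) ‖(C, D)‖₂³`, with denominators cleared.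
lemma two_point_weight_norm_bound {C D : ℝ} (hC : 0 ≤ C) (hD : 0 ≤ D) :
    9 * ((C ^ 3 + 2 * D ^ 3) ^ 2 + (2 * C ^ 3 + D ^ 3) ^ 2) * (C ^ 2 + D ^ 2) ^ 3
      ≤ 16 * ((C ^ 3 + 2 * D ^ 3) ^ 2 * (2 * C ^ 3 + D ^ 3) ^ 2) := by
  rw [← sub_nonneg, show 16 * ((C ^ 3 + 2 * D ^ 3) ^ 2 * (2 * C ^ 3 + D ^ 3) ^ 2)
      - 9 * ((C ^ 3 + 2 * D ^ 3) ^ 2 + (2 * C ^ 3 + D ^ 3) ^ 2) * (C ^ 2 + D ^ 2) ^ 3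
      = (C - D) ^ 4 * (19 * C ^ 8 + 76 * C ^ 7 * D + 55 * C ^ 6 * D ^ 2 + 88 * C ^ 5 * D ^ 3
        + 172 * C ^ 4 * D ^ 4 + 88 * C ^ 3 * D ^ 5 + 55 * C ^ 2 * D ^ 6 + 76 * C * D ^ 7
        + 19 * D ^ 8) by ring]
  positivity

lemma two_point_bound_sq {A B C D : ℝ} (hA : 0 ≤ A) (hB : 0 ≤ B) (hC : 0 ≤ C)
    (hD : 0 ≤ D) :
    9 * ((A ^ 2 + B ^ 2) ^ 3 * (C ^ 2 + D ^ 2) ^ 3)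
      ≤ 16 * (A ^ 3 * (C ^ 3 + 2 * D ^ 3) + B ^ 3 * (2 * C ^ 3 + D ^ 3)) ^ 2 := by
  rcases eq_or_lt_of_le (by positivity : 0 ≤ C ^ 2 + D ^ 2) with h0 | hCD
  · rw [← h0, zero_pow three_ne_zero, mul_zero, mul_zero]; positivity
  have hweights : 0 < (C ^ 3 + 2 * D ^ 3) ^ 2 * (2 * C ^ 3 + D ^ 3) ^ 2 := by
    have : 0 < C ∨ 0 < D := by
      by_contra! h
      nlinarith [le_antisymm h.1 hC, le_antisymm h.2 hD]
    rcases this with h | h <;> positivity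
  have hholder := reverse_holder_two hA hB (by positivity : 0 ≤ C ^ 3 + 2 * D ^ 3)
    (by positivity : 0 ≤ 2 * C ^ 3 + D ^ 3)
  have hnorm := two_point_weight_norm_bound hC hD
  refine le_of_mul_le_mul_right ?_ hweights
  nlinarith [mul_le_mul_of_nonneg_left hholder (by positivity : 0 ≤ 9 * (C ^ 2 + D ^ 2) ^ 3),
    mul_le_mul_of_nonneg_left hnorm
      (sq_nonneg (A ^ 3 * (C ^ 3 + 2 * D ^ 3) + B ^ 3 * (2 * C ^ 3 + D ^ 3)))]

-- `pairWeight s t / 6` is the probability that `(decide (g a < g b), decide (g b < g c)) = (s, t)`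
-- for a uniform permutation `g` (`six_mul_card_pairOrder`).
noncomputable def pairWeight (s t : Bool) : ℝ := if s = t then 1 else 2

lemma pairWeight_nonneg (s t : Bool) : 0 ≤ pairWeight s t := by
  unfold pairWeight; split <;> norm_num

lemma reverse_hypercontractive_two_point {U V : Bool → ℝ} (hU : ∀ s, 0 ≤ U s)
    (hV : ∀ t, 0 ≤ V t) :
    3 / 4 * (√(∑ s, U s ^ 2) * √(∑ t, V t ^ 2)) ^ 3
      ≤ ∑ s, ∑ t, pairWeight s t * (U s ^ 3 * V t ^ 3) := by
  have hsq := two_point_bound_sq (hU true) (hU false) (hV true) (hV false)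
  have hR : ∑ s, ∑ t, pairWeight s t * (U s ^ 3 * V t ^ 3)
      = U true ^ 3 * (V true ^ 3 + 2 * V false ^ 3)
        + U false ^ 3 * (2 * V true ^ 3 + V false ^ 3) := by
    simp only [Fintype.sum_bool, pairWeight, Bool.true_eq_false, Bool.false_eq_true, if_true,
      if_false]
    ring
  rw [hR]
  refine le_of_pow_le_pow_left₀ two_ne_zero ?_ ?_
  · have := hU true; have := hU false; have := hV true; have := hV false
    positivity
  calc (3 / 4 * (√(∑ s, U s ^ 2) * √(∑ t, V t ^ 2)) ^ 3) ^ 2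
      = 9 / 16 * ((√(∑ s, U s ^ 2) ^ 2) ^ 3 * (√(∑ t, V t ^ 2) ^ 2) ^ 3) := by ring
    _ = 9 / 16 * ((U true ^ 2 + U false ^ 2) ^ 3 * (V true ^ 2 + V false ^ 2) ^ 3) := by
        rw [Real.sq_sqrt (by positivity), Real.sq_sqrt (by positivity), Fintype.sum_bool,
          Fintype.sum_bool]
    _ ≤ _ := by linarith

lemma sum_pi_fin_succ {α M : Type*} [Fintype α] [AddCommMonoid M] {n : ℕ}
    (φ : (Fin (n + 1) → α) → M) :
    ∑ x, φ x = ∑ s : α, ∑ x : Fin n → α, φ (Fin.cons s x) := by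
  rw [← (Fin.consEquiv fun _ => α).sum_comp, Fintype.sum_prod_type]
  rfl

-- `E[F x * G y] ≥ ‖F‖_{2/3} ‖G‖_{2/3}` for `F = u³`, `G = w³`,
-- under the law `∏ pairWeight / 6ⁿ` of `(x, y)`.
lemma reverse_hypercontractive (n : ℕ) {u w : (Fin n → Bool) → ℝ} (hu : ∀ x, 0 ≤ u x)
    (hw : ∀ y, 0 ≤ w y) :
    (3 / 4) ^ n * (√(∑ x, u x ^ 2) * √(∑ y, w y ^ 2)) ^ 3
      ≤ ∑ x, ∑ y, (∏ v, pairWeight (x v) (y v)) * (u x ^ 3 * w y ^ 3) := by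
  induction n with
  | zero =>
    simp only [Fintype.sum_unique, univ_eq_empty, prod_empty, pow_zero, one_mul,
      Real.sqrt_sq_eq_abs, abs_of_nonneg (hu _), abs_of_nonneg (hw _), mul_pow, le_refl]
  | succ n ih =>
    set U : Bool → ℝ := fun s => √(∑ x, u (Fin.cons s x) ^ 2)
    set V : Bool → ℝ := fun t => √(∑ y, w (Fin.cons t y) ^ 2)
    have hsumU : ∑ x, u x ^ 2 = ∑ s, U s ^ 2 := by
      rw [sum_pi_fin_succ]
      exact sum_congr rfl fun s _ => (Real.sq_sqrt (by positivity)).symm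
    have hsumV : ∑ y, w y ^ 2 = ∑ t, V t ^ 2 := by
      rw [sum_pi_fin_succ]
      exact sum_congr rfl fun t _ => (Real.sq_sqrt (by positivity)).symm
    have hR : ∑ x, ∑ y, (∏ v, pairWeight (x v) (y v)) * (u x ^ 3 * w y ^ 3)
        = ∑ s, ∑ t, pairWeight s t * ∑ x, ∑ y, (∏ v, pairWeight (x v) (y v))
            * (u (Fin.cons s x) ^ 3 * w (Fin.cons t y) ^ 3) := by
      simp only [sum_pi_fin_succ (fun x => ∑ y, _), sum_pi_fin_succ (fun y => _),
        Fin.prod_univ_succ, Fin.cons_zero, Fin.cons_succ, mul_sum]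
      rw [sum_congr rfl fun s _ => sum_comm]
      exact sum_congr rfl fun s _ => sum_congr rfl fun t _ =>
        sum_congr rfl fun x _ => sum_congr rfl fun y _ => by ring
    calc (3 / 4) ^ (n + 1) * (√(∑ x, u x ^ 2) * √(∑ y, w y ^ 2)) ^ 3
        = (3 / 4) ^ n * (3 / 4 * (√(∑ s, U s ^ 2) * √(∑ t, V t ^ 2)) ^ 3) := by
          rw [hsumU, hsumV]; ring
      _ ≤ (3 / 4) ^ n * ∑ s, ∑ t, pairWeight s t * (U s ^ 3 * V t ^ 3) :=
          mul_le_mul_of_nonneg_left (reverse_hypercontractive_two_point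
            (fun _ => Real.sqrt_nonneg _) (fun _ => Real.sqrt_nonneg _)) (by positivity)
      _ = ∑ s, ∑ t, pairWeight s t * ((3 / 4) ^ n * (U s * V t) ^ 3) := by
          simp only [mul_sum]
          exact sum_congr rfl fun s _ => sum_congr rfl fun t _ => by ring
      _ ≤ _ := by
          rw [hR]
          gcongr with s _ t _
          · exact pairWeight_nonneg s t
          · exact ih (fun x => hu _) (fun y => hw _)

section Profiles

variable {k : ℕ}

def orderPattern (a b c : Fin k) (g : Perm (Fin k)) : Bool × Bool × Bool :=
  (decide (g a < g b), decide (g b < g c), decide (g c < g a))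

abbrev IsAcyclicPattern (p : Bool × Bool × Bool) : Prop :=
  p ≠ (true, true, true) ∧ p ≠ (false, false, false)

def permsOfTriple (a b c : Fin k) : Finset (Perm (Fin k)) :=
  {1, swap a b, swap b c, swap a c, swap a b * swap b c, swap b c * swap a b}

lemma decide_lt_eq_not_decide_lt {α : Type*} [LinearOrder α] {u v : α} (h : u ≠ v) :
    decide (v < u) = !decide (u < v) := by
  rcases h.lt_or_gt with h | h <;> simp [h, not_lt_of_gt h]

section Triple

variable {a b c : Fin k} (hab : a ≠ b) (hbc : b ≠ c) (hac : a ≠ c)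
include hab hbc hac

lemma isAcyclicPattern_orderPattern (g : Perm (Fin k)) :
    IsAcyclicPattern (orderPattern a b c g) := by
  have := g.injective.ne hab
  have := g.injective.ne hbc
  have := g.injective.ne hac
  unfold orderPattern
  constructor <;> intro h <;> simp only [Prod.mk.injEq, decide_eq_true_eq,
    decide_eq_false_iff_not, not_lt] at h <;> omega

lemma orderPattern_mul_swap_ab (g : Perm (Fin k)) :
    orderPattern a b c (g * swap a b)
      = (!(orderPattern a b c g).1, !(orderPattern a b c g).2.2, !(orderPattern a b c g).2.1) := by
  simp only [orderPattern, Perm.mul_apply, swap_apply_left, swap_apply_right,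
    swap_apply_of_ne_of_ne hac.symm hbc.symm]
  rw [decide_lt_eq_not_decide_lt (g.injective.ne hab),
    decide_lt_eq_not_decide_lt (g.injective.ne hac.symm),
    decide_lt_eq_not_decide_lt (g.injective.ne hbc)]

lemma orderPattern_mul_swap_bc (g : Perm (Fin k)) :
    orderPattern a b c (g * swap b c)
      = (!(orderPattern a b c g).2.2, !(orderPattern a b c g).2.1, !(orderPattern a b c g).1) := by
  simp only [orderPattern, Perm.mul_apply, swap_apply_left, swap_apply_right,
    swap_apply_of_ne_of_ne hab hac]
  rw [decide_lt_eq_not_decide_lt (g.injective.ne hac.symm),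
    decide_lt_eq_not_decide_lt (g.injective.ne hbc),
    decide_lt_eq_not_decide_lt (g.injective.ne hab)]

lemma orderPattern_mul_swap_ac (g : Perm (Fin k)) :
    orderPattern a b c (g * swap a c)
      = (!(orderPattern a b c g).2.1, !(orderPattern a b c g).1, !(orderPattern a b c g).2.2) := by
  simp only [orderPattern, Perm.mul_apply, swap_apply_left, swap_apply_right,
    swap_apply_of_ne_of_ne hab.symm hbc]
  rw [decide_lt_eq_not_decide_lt (g.injective.ne hbc),
    decide_lt_eq_not_decide_lt (g.injective.ne hab),
    decide_lt_eq_not_decide_lt (g.injective.ne hac.symm)]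

lemma exists_mem_permsOfTriple_orderPattern_mul {p q : Bool × Bool × Bool}
    (hp : IsAcyclicPattern p) (hq : IsAcyclicPattern q) :
    ∃ π ∈ permsOfTriple a b c,
      ∀ g, orderPattern a b c g = p → orderPattern a b c (g * π) = q := by
  -- the images of `p` under the elements of `permsOfTriple`
  have hreach : ∀ p q : Bool × Bool × Bool, IsAcyclicPattern p → IsAcyclicPattern q →
      q = p ∨ q = (!p.1, !p.2.2, !p.2.1) ∨ q = (!p.2.2, !p.2.1, !p.1)
        ∨ q = (!p.2.1, !p.1, !p.2.2) ∨ q = (p.2.2, p.1, p.2.1) ∨ q = (p.2.1, p.2.2, p.1) := by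
    decide
  rcases hreach p q hp hq with rfl | rfl | rfl | rfl | rfl | rfl
  · exact ⟨1, by simp [permsOfTriple], fun g hg => by rw [mul_one, hg]⟩
  · exact ⟨swap a b, by simp [permsOfTriple], fun g hg => by
      rw [orderPattern_mul_swap_ab hab hbc hac, hg]⟩
  · exact ⟨swap b c, by simp [permsOfTriple], fun g hg => by
      rw [orderPattern_mul_swap_bc hab hbc hac, hg]⟩
  · exact ⟨swap a c, by simp [permsOfTriple], fun g hg => by
      rw [orderPattern_mul_swap_ac hab hbc hac, hg]⟩
  · exact ⟨swap b c * swap a b, by simp [permsOfTriple], fun g hg => by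
      rw [← mul_assoc, orderPattern_mul_swap_ab hab hbc hac,
        orderPattern_mul_swap_bc hab hbc hac, hg]; simp⟩
  · exact ⟨swap a b * swap b c, by simp [permsOfTriple], fun g hg => by
      rw [← mul_assoc, orderPattern_mul_swap_bc hab hbc hac,
        orderPattern_mul_swap_ab hab hbc hac, hg]; simp⟩

lemma card_orderPattern_le {p q : Bool × Bool × Bool} (hp : IsAcyclicPattern p)
    (hq : IsAcyclicPattern q) :
    #{g | orderPattern a b c g = p} ≤ #{g | orderPattern a b c g = q} := by
  obtain ⟨π, -, hπ⟩ := exists_mem_permsOfTriple_orderPattern_mul hab hbc hac hp hq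
  refine card_le_card_of_injOn (· * π) (fun g hg => ?_) fun _ _ _ _ h => mul_right_cancel h
  simp only [coe_filter, mem_univ, true_and, Set.mem_ofPred_eq] at hg ⊢
  exact hπ g hg

lemma card_orderPattern_eq_zero {p : Bool × Bool × Bool} (hp : ¬IsAcyclicPattern p) :
    #{g | orderPattern a b c g = p} = 0 := by
  rw [card_eq_zero, filter_eq_empty_iff]
  rintro g - rfl
  exact hp (isAcyclicPattern_orderPattern hab hbc hac g)

lemma six_mul_card_orderPattern {p : Bool × Bool × Bool} (hp : IsAcyclicPattern p) :
    6 * #{g | orderPattern a b c g = p} = Fintype.card (Perm (Fin k)) := by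
  have hfiber : ∀ q, #{g | orderPattern a b c g = q}
      = if IsAcyclicPattern q then #{g | orderPattern a b c g = p} else 0 := by
    intro q
    split_ifs with hq
    · exact (card_orderPattern_le hab hbc hac hq hp).antisymm
        (card_orderPattern_le hab hbc hac hp hq)
    · exact card_orderPattern_eq_zero hab hbc hac hq
  rw [← card_univ, card_eq_sum_card_fiberwise (s := univ) (f := orderPattern a b c)
    (t := univ) (fun _ _ => mem_univ _)]
  rw [sum_congr rfl fun q _ => hfiber q, sum_ite, sum_const_zero, add_zero, sum_const,
    smul_eq_mul, show #{q : Bool × Bool × Bool | IsAcyclicPattern q} = 6 by decide]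

lemma six_mul_card_pairOrder (s t : Bool) :
    6 * (#{g : Perm (Fin k) | decide (g a < g b) = s ∧ decide (g b < g c) = t} : ℝ)
      = pairWeight s t * Fintype.card (Perm (Fin k)) := by
  have hsplit : #{g : Perm (Fin k) | decide (g a < g b) = s ∧ decide (g b < g c) = t}
      = #{g | orderPattern a b c g = (s, t, true)}
        + #{g | orderPattern a b c g = (s, t, false)} := by
    rw [card_eq_sum_card_fiberwise (f := fun g => (orderPattern a b c g).2.2) (t := univ)
      (fun _ _ => mem_univ _), Fintype.sum_bool]
    congr 1 <;> congr 1 <;> ext g <;> simp [orderPattern, and_assoc]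
  have hclass : ∀ p, 6 * #{g | orderPattern a b c g = p}
      = if IsAcyclicPattern p then Fintype.card (Perm (Fin k)) else 0 := by
    intro p
    split_ifs with hp
    · exact six_mul_card_orderPattern hab hbc hac hp
    · rw [card_orderPattern_eq_zero hab hbc hac hp, mul_zero]
  have hnat : 6 * #{g : Perm (Fin k) | decide (g a < g b) = s ∧ decide (g b < g c) = t}
      = (if s = t then 1 else 2) * Fintype.card (Perm (Fin k)) := by
    rw [hsplit, mul_add, hclass, hclass]
    rcases s <;> rcases t <;> simp [IsAcyclicPattern, two_mul]
  rw [pairWeight]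
  exact_mod_cast hnat

lemma card_pairVec_fiber {n : ℕ} (x y : Fin n → Bool) :
    (#{σ : Fin n → Perm (Fin k) | pairVec a b σ = x ∧ pairVec b c σ = y} : ℝ)
      = (Fintype.card (Perm (Fin k)) / 6) ^ n * ∏ v, pairWeight (x v) (y v) := by
  have hpi : ({σ : Fin n → Perm (Fin k) | pairVec a b σ = x ∧ pairVec b c σ = y} : Finset _)
      = Fintype.piFinset fun v => {g | decide (g a < g b) = x v ∧ decide (g b < g c) = y v} := by
    ext σ
    simp [pairVec, funext_iff, forall_and]
  rw [hpi, Fintype.card_piFinset, Nat.cast_prod, ← Fin.prod_const, ← prod_mul_distrib]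
  refine prod_congr rfl fun v _ => ?_
  linarith [six_mul_card_pairOrder hab hbc hac (x v) (y v)]

lemma le_card_filter_pairVec {n : ℕ} (P Q : (Fin n → Bool) → Prop) [DecidablePred P]
    [DecidablePred Q] :
    (Fintype.card (Perm (Fin k)) : ℝ) ^ n
        * (√(#{x | P x} / 2 ^ n) * √(#{y | Q y} / 2 ^ n)) ^ 3
      ≤ #{σ : Fin n → Perm (Fin k) | P (pairVec a b σ) ∧ Q (pairVec b c σ)} := by
  set K : ℝ := (Fintype.card (Perm (Fin k)) : ℝ)
  set χP : (Fin n → Bool) → ℝ := fun x => if P x then 1 else 0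
  set χQ : (Fin n → Bool) → ℝ := fun y => if Q y then 1 else 0
  have hχP : ∀ x, 0 ≤ χP x := fun x => by positivity
  have hχQ : ∀ y, 0 ≤ χQ y := fun y => by positivity
  have hP : ∑ x, χP x ^ 2 = #{x | P x} := by simp [χP, sum_boole]
  have hQ : ∑ y, χQ y ^ 2 = #{y | Q y} := by simp [χQ, sum_boole]
  have hcount : (#{σ : Fin n → Perm (Fin k) | P (pairVec a b σ) ∧ Q (pairVec b c σ)} : ℝ)
      = (K / 6) ^ n * ∑ x, ∑ y, (∏ v, pairWeight (x v) (y v)) * (χP x ^ 3 * χQ y ^ 3) := by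
    rw [← sum_boole, ← sum_fiberwise' univ (fun σ => (pairVec a b σ, pairVec b c σ))
      (fun xy => if P xy.1 ∧ Q xy.2 then (1 : ℝ) else 0), Fintype.sum_prod_type, mul_sum]
    refine sum_congr rfl fun x _ => ?_
    rw [mul_sum]
    refine sum_congr rfl fun y _ => ?_
    rw [sum_const, nsmul_eq_mul]
    simp only [Prod.mk.injEq, card_pairVec_fiber hab hbc hac, χP, χQ]
    by_cases hx : P x <;> by_cases hy : Q y <;> simp [hx, hy, K]
  have hsqrt : (√(#{x | P x} / 2 ^ n) * √(#{y | Q y} / 2 ^ n)) ^ 3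
      = (√(#{x | P x}) * √(#{y | Q y})) ^ 3 / 8 ^ n := by
    have h2 : √((2 : ℝ) ^ n) ^ 6 = 8 ^ n := by
      rw [show √((2 : ℝ) ^ n) ^ 6 = (√(2 ^ n) ^ 2) ^ 3 by ring, Real.sq_sqrt (by positivity),
        ← pow_mul, mul_comm, pow_mul]
      norm_num
    rw [Real.sqrt_div' _ (by positivity), Real.sqrt_div' _ (by positivity), ← h2]
    field_simp
  rw [hcount, hsqrt, ← hP, ← hQ]
  calc K ^ n * ((√(∑ x, χP x ^ 2) * √(∑ y, χQ y ^ 2)) ^ 3 / 8 ^ n)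
      = (K / 6) ^ n * ((3 / 4) ^ n * (√(∑ x, χP x ^ 2) * √(∑ y, χQ y ^ 2)) ^ 3) := by
        rw [div_pow, show (3 / 4 : ℝ) ^ n = 6 ^ n / 8 ^ n by rw [← div_pow]; norm_num]
        field_simp
    _ ≤ _ := mul_le_mul_of_nonneg_left (reverse_hypercontractive n hχP hχQ) (by positivity)

end Triple

lemma pairVec_update {n : ℕ} (p q : Fin k) (σ : Fin n → Perm (Fin k))
    (i : Fin n) (g : Perm (Fin k)) :
    pairVec p q (Function.update σ i g)
      = Function.update (pairVec p q σ) i (decide (g p < g q)) := by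
  funext v
  by_cases hv : v = i
  · subst hv; simp [pairVec]
  · simp [pairVec, hv]

lemma update_update_mul_inv_update_update_mul {ι G : Type*} [DecidableEq ι] [Group G]
    (i j : ι) (σ : ι → G) (π₁ π₂ : G) :
    let τ := Function.update (Function.update σ i (σ i * π₁)) j (σ j * π₂)
    Function.update (Function.update τ i (τ i * π₁⁻¹)) j (τ j * π₂⁻¹) = σ := by
  funext v
  by_cases hvj : v = j
  · subst hvj; simp
  · by_cases hvi : v = i
    · subst hvi; simp [hvj]
    · simp [hvi, hvj]

lemma PivotalAt.exists_update_eq {n : ℕ} {F : (Fin n → Bool) → Bool} {i : Fin n}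
    {x : Fin n → Bool} (h : PivotalAt F i x) (v : Bool) :
    ∃ s, F (Function.update x i s) = v := by
  by_cases ht : F (Function.update x i true) = v
  · exact ⟨true, ht⟩
  · exact ⟨false, by cases v <;> simp_all [PivotalAt]⟩

def paradoxes {n : ℕ} (f : Fin k → Fin k → (Fin n → Bool) → Bool) :
    Finset (Fin n → Perm (Fin k)) :=
  {σ | ∃ p q r : Fin k, p ≠ q ∧ q ≠ r ∧ p ≠ r ∧ f p q (pairVec p q σ) = true ∧
    f q r (pairVec q r σ) = true ∧ f r p (pairVec r p σ) = true}

section Paradox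

variable {n : ℕ} {f : Fin k → Fin k → (Fin n → Bool) → Bool}
  (hanti : ∀ (a b : Fin k), a ≠ b → ∀ σ : Fin n → Perm (Fin k),
    f b a (pairVec b a σ) = !f a b (pairVec a b σ))
  {a b c : Fin k} (hab : a ≠ b) (hbc : b ≠ c) (hac : a ≠ c)
include hanti hab hbc hac

lemma mem_paradoxes_of_eq {σ : Fin n → Perm (Fin k)} {w : Bool}
    (h₁ : f a b (pairVec a b σ) = w) (h₂ : f b c (pairVec b c σ) = w)
    (h₃ : f c a (pairVec c a σ) = w) : σ ∈ paradoxes f := by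
  simp only [paradoxes, mem_filter, mem_univ, true_and]
  cases w
  · refine ⟨c, b, a, hbc.symm, hab.symm, hac.symm, ?_, ?_, ?_⟩
    · rw [hanti b c hbc, h₂]; rfl
    · rw [hanti a b hab, h₁]; rfl
    · rw [hanti c a hac.symm, h₃]; rfl
  · exact ⟨a, b, c, hab, hbc, hac, h₁, h₂, h₃⟩

variable {i j : Fin n} (hij : i ≠ j)
include hij

lemma exists_update_update_mem_paradoxes {σ : Fin n → Perm (Fin k)}
    (hi : PivotalAt (f a b) i (pairVec a b σ)) (hj : PivotalAt (f b c) j (pairVec b c σ)) :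
    ∃ π₁ ∈ permsOfTriple a b c, ∃ π₂ ∈ permsOfTriple a b c,
      Function.update (Function.update σ i (σ i * π₁)) j (σ j * π₂) ∈ paradoxes f := by
  set x := pairVec a b σ
  set y := pairVec b c σ
  set z := pairVec c a σ
  -- the new `c`-vs-`a` vector does not depend on `s` and `t`, so the common value `w` comes first
  set w := f c a (Function.update (Function.update z i (!y i)) j (!x j))
  obtain ⟨s, hs⟩ := hi.exists_update_eq w
  obtain ⟨t, ht⟩ := hj.exists_update_eq w
  obtain ⟨π₁, hπ₁, h₁⟩ := exists_mem_permsOfTriple_orderPattern_mul hab hbc hac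
    (isAcyclicPattern_orderPattern hab hbc hac (σ i))
    (q := (s, y i, !y i)) (by cases s <;> cases y i <;> decide)
  obtain ⟨π₂, hπ₂, h₂⟩ := exists_mem_permsOfTriple_orderPattern_mul hab hbc hac
    (isAcyclicPattern_orderPattern hab hbc hac (σ j))
    (q := (x j, t, !x j)) (by cases t <;> cases x j <;> decide)
  have e₁ := h₁ (σ i) rfl
  have e₂ := h₂ (σ j) rfl
  simp only [orderPattern, Prod.mk.injEq] at e₁ e₂
  refine ⟨π₁, hπ₁, π₂, hπ₂, mem_paradoxes_of_eq hanti hab hbc hac (w := w) ?_ ?_ ?_⟩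
  all_goals simp only [pairVec_update, e₁, e₂]
  · rwa [Function.update_eq_self_iff.mpr (Function.update_of_ne hij.symm _ _).symm]
  · rwa [Function.update_eq_self_iff.mpr rfl]
  · rfl

lemma card_jointPivotal_le :
    #{σ : Fin n → Perm (Fin k) | PivotalAt (f a b) i (pairVec a b σ) ∧
        PivotalAt (f b c) j (pairVec b c σ)} ≤ 36 * #(paradoxes f) := by
  set undo : (Fin n → Perm (Fin k)) × Perm (Fin k) × Perm (Fin k) → Fin n → Perm (Fin k) :=
    fun τ ↦ Function.update (Function.update τ.1 i (τ.1 i * τ.2.1⁻¹)) j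
      (τ.1 j * τ.2.2⁻¹)
  have hsub : ({σ : Fin n → Perm (Fin k) | PivotalAt (f a b) i (pairVec a b σ) ∧
        PivotalAt (f b c) j (pairVec b c σ)} : Finset _)
      ⊆ (paradoxes f ×ˢ (permsOfTriple a b c ×ˢ permsOfTriple a b c)).image undo := by
    intro σ hσ
    simp only [mem_filter, mem_univ, true_and] at hσ
    obtain ⟨π₁, hπ₁, π₂, hπ₂, hmem⟩ :=
      exists_update_update_mem_paradoxes hanti hab hbc hac hij hσ.1 hσ.2
    exact mem_image.mpr ⟨(_, π₁, π₂),
      mem_product.mpr ⟨hmem, mem_product.mpr ⟨hπ₁, hπ₂⟩⟩,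
      update_update_mul_inv_update_update_mul i j σ π₁ π₂⟩
  calc _ ≤ _ := card_le_card hsub
    _ ≤ _ := card_image_le
    _ = #(paradoxes f) * (#(permsOfTriple a b c) * #(permsOfTriple a b c)) := by
        rw [card_product, card_product]
    _ ≤ #(paradoxes f) * (6 * 6) := by
        gcongr <;> exact card_le_six
    _ = _ := by ring

end Paradox

end Profiles

lemma pow_three_lt_sqrt_mul_sqrt_pow_three {ε x y : ℝ} (hx : ε < x) (hy : ε < y) :
    ε ^ 3 < (√x * √y) ^ 3 := by
  rcases lt_or_ge ε 0 with hε | hε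
  · exact (Odd.pow_neg (by decide) hε).trans_le (by positivity)
  · calc ε ^ 3 = (√ε * √ε) ^ 3 := by rw [Real.mul_self_sqrt hε]
      _ < (√x * √y) ^ 3 := by gcongr

theorem stmt_8_general (n k : ℕ)
    (f : Fin k → Fin k → (Fin n → Bool) → Bool)
    (hanti : ∀ (a b : Fin k), a ≠ b → ∀ σ : Fin n → Equiv.Perm (Fin k),
      f b a (pairVec b a σ) = !f a b (pairVec a b σ))
    (a b c : Fin k) (hab : a ≠ b) (hbc : b ≠ c) (hac : a ≠ c)
    (i j : Fin n) (hij : i ≠ j) (ε : ℝ)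
    (hi : ε < influence (f a b) i) (hj : ε < influence (f b c) j) :
    ε^3 / 36 < ((Finset.univ.filter fun σ : Fin n → Equiv.Perm (Fin k) =>
        ∃ p q r : Fin k, p ≠ q ∧ q ≠ r ∧ p ≠ r ∧
          f p q (pairVec p q σ) = true ∧ f q r (pairVec q r σ) = true ∧
          f r p (pairVec r p σ) = true).card : ℝ) /
      (Fintype.card (Equiv.Perm (Fin k)))^n := by
  have hK : (0 : ℝ) < (Fintype.card (Perm (Fin k)) : ℝ) ^ n := by positivity
  have hjoint := le_card_filter_pairVec hab hbc hac (PivotalAt (f a b) i) (PivotalAt (f b c) j)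
  have hparadox : ((_ : ℕ) : ℝ) ≤ ((36 * #(paradoxes f) : ℕ) : ℝ) :=
    Nat.cast_le.mpr (card_jointPivotal_le hanti hab hbc hac hij)
  have hε := mul_lt_mul_of_pos_right (pow_three_lt_sqrt_mul_sqrt_pow_three hi hj) hK
  unfold influence at hε
  push_cast at hparadox
  rw [lt_div_iff₀ hK]
  change _ < (#(paradoxes f) : ℝ)
  linarith

/-- Quantitative two-pivot theorem: for an IIA constitution on `k ≥ 3` alternatives
given by pairwise functions `f a b`, if two distinct voters have influence `> ε` on
the pairwise functions of two different pairs `(a,b)` and `(b,c)`, then the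
probability (under uniform voting) of a non-transitive outcome exceeds `ε³/36`.
Non-transitivity of the outcome means the pairwise social preferences contain a
3-cycle. -/
theorem stmt_8 (n k : ℕ) (hk : 3 ≤ k)
    (f : Fin k → Fin k → (Fin n → Bool) → Bool)
    (hanti : ∀ (a b : Fin k), a ≠ b → ∀ σ : Fin n → Equiv.Perm (Fin k),
      f b a (pairVec b a σ) = !f a b (pairVec a b σ))
    (a b c : Fin k) (hab : a ≠ b) (hbc : b ≠ c) (hac : a ≠ c)
    (i j : Fin n) (hij : i ≠ j) (ε : ℝ) (hε : 0 < ε)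
    (hi : ε < influence (f a b) i) (hj : ε < influence (f b c) j) :
    ε^3 / 36 < ((Finset.univ.filter fun σ : Fin n → Equiv.Perm (Fin k) =>
        ∃ p q r : Fin k, p ≠ q ∧ q ≠ r ∧ p ≠ r ∧
          f p q (pairVec p q σ) = true ∧ f q r (pairVec q r σ) = true ∧
          f r p (pairVec r p σ) = true).card : ℝ) /
      (Fintype.card (Equiv.Perm (Fin k)))^n :=
  stmt_8_general n k f hanti a b c hab hbc hac i j hij ε hi hj
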